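/- arXiv:2201.01338 — 2 statements merged into one kernel-verified Lean document; each statement's English description precedes it below -/
import Mathlib

section
/- If the function f_1(u,·) is concave for every u ∈ U, then E[ϑ_E^{(N)}] ≤ ϑ; that is, the empirical optimal value of the two-level composite problem has a downward (non-positive) bias. -/
open MeasureTheory Filter Set

noncomputable section

abbrev Vec (d : ℕ) : Type := EuclideanSpace ℝ (Fin d)

/-- Nested composite value: level `0` is the innermost function (the paper's `f_{k+1}`),
level `k` is the outermost one (the paper's `f_1`). -/
def nest {α : Type} [MeasurableSpace α] (n : ℕ) (d : ℕ → ℕ)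
    (f : (t : ℕ) → Vec n → Vec (d t) → α → Vec (d (t + 1)))
    (Q : ℕ → Measure α) (u : Vec n) : (t : ℕ) → Vec (d t)
  | 0 => 0
  | t + 1 => ∫ x, f t u (nest n d f Q u t) x ∂(Q t)

/-- Composite functional value (a scalar, since `d (k+1) = 1`). -/
def rhoC {α : Type} [MeasurableSpace α] (n k : ℕ) (d : ℕ → ℕ)
    (f : (t : ℕ) → Vec n → Vec (d t) → α → Vec (d (t + 1)))
    (Q : ℕ → Measure α) (u : Vec n) : ℝ :=
  ∑ i, nest n d f Q u (k + 1) i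

def optVal {n : ℕ} (U : Set (Vec n)) (g : Vec n → ℝ) : ℝ := sInf (g '' U)

def argminSet {n : ℕ} (U : Set (Vec n)) (g : Vec n → ℝ) : Set (Vec n) :=
  {u ∈ U | g u = optVal U g}

/-- one-sided deviation 𝔡(A,B) -/
def dev {E : Type} [PseudoMetricSpace E] (A B : Set E) : ℝ :=
  sSup ((fun x => Metric.infDist x B) '' A)

/-- Pompeiu–Hausdorff distance 𝔇(A,B) -/
def hdist {E : Type} [PseudoMetricSpace E] (A B : Set E) : ℝ :=
  max (dev A B) (dev B A)

/-- empirical measure of the first `N` observations -/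
def empMeas {α : Type} [MeasurableSpace α] {Ω : Type} [MeasurableSpace Ω]
    (X : ℕ → Ω → α) (N : ℕ) (ω : Ω) : Measure α :=
  (N : ENNReal)⁻¹ • ∑ i ∈ Finset.range N, Measure.dirac (X i ω)

/-- convolution of measures on an additive group -/
def convMeas {α : Type} [MeasurableSpace α] [Add α] (μ ν : Measure α) : Measure α :=
  Measure.map (fun p : α × α => p.1 + p.2) (μ.prod ν)

/-- closed convex hull -/
def cco {E : Type} [AddCommGroup E] [Module ℝ E] [TopologicalSpace E] (s : Set E) : Set E :=
  closure (convexHull ℝ s)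

/-- kernel smoothing measure with bandwidth `h`:  dμ(x) = h^{-m} K(x/h) dx -/
def kerMeas (m : ℕ) (K : Vec m → ℝ) (h : ℝ) : Measure (Vec m) :=
  volume.withDensity fun x => ENNReal.ofReal (K (h⁻¹ • x) / h ^ m)

/-!
For each fixed `u ∈ U` the empirical optimal value is at most `f₁(u, ḡ_N(u))`, where `ḡ_N(u)` is
the sample mean of `f₂(u, X_i)`. Taking expectations and applying Jensen's inequality to the
concave `f₁(u, ·)` gives `E[ϑ_E^{(N)}] ≤ f₁(u, E[ḡ_N(u)]) = f₁(u, E[f₂(u, X)])`, and the bound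
passes to the infimum over `u`.
-/

theorem ConcaveOn.exists_le_affine {E : Type*} [NormedAddCommGroup E] [NormedSpace ℝ E]
    {φ : E → ℝ} (hφ : ConcaveOn ℝ univ φ) (hφc : UpperSemicontinuous φ) :
    ∃ (L : E →L[ℝ] ℝ) (c : ℝ), ∀ x, φ x ≤ L x + c := by
  obtain ⟨L, c, hle, -⟩ := hφ.neg.exists_affine_le_of_lt (𝕜 := ℝ) (mem_univ 0)
    (sub_one_lt _) isClosed_univ (hφc.neg.lowerSemicontinuousOn _)
  refine ⟨-L, -c, fun x => ?_⟩
  have := hle ⟨x, mem_univ x⟩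
  simp only [domRestrict_apply, Pi.add_apply, Function.comp_apply, RCLike.re_to_real,
    Function.const_apply, Pi.neg_apply] at this
  simp only [neg_apply]
  linarith

/-- The integrable minorant `h`, together with an affine majorant of `φ`, makes `φ ∘ f`
integrable, as Jensen's inequality requires. -/
theorem ConcaveOn.integral_le_map_integral_of_le_comp {Ω E : Type*} [MeasurableSpace Ω]
    {μ : Measure Ω} [IsProbabilityMeasure μ] [NormedAddCommGroup E] [NormedSpace ℝ E]
    [CompleteSpace E] {φ : E → ℝ} {f : Ω → E} {h : Ω → ℝ} (hφ : ConcaveOn ℝ univ φ)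
    (hφc : Continuous φ) (hf : Integrable f μ) (hh : Integrable h μ) (hle : ∀ᵐ ω ∂μ, h ω ≤ φ (f ω)) :
    ∫ ω, h ω ∂μ ≤ φ (∫ ω, f ω ∂μ) := by
  obtain ⟨L, c, hφL⟩ := hφ.exists_le_affine hφc.upperSemicontinuous
  have hφf : Integrable (φ ∘ f) μ :=
    integrable_of_le_of_le (hφc.comp_aestronglyMeasurable hf.aestronglyMeasurable) hle
      (ae_of_all _ fun ω => hφL (f ω)) hh ((L.integrable_comp hf).add (integrable_const c))
  calc ∫ ω, h ω ∂μ ≤ ∫ ω, φ (f ω) ∂μ := integral_mono_ae hh hφf hle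
    _ ≤ φ (∫ ω, f ω ∂μ) :=
      hφ.le_map_integral hφc.continuousOn isClosed_univ (ae_of_all _ fun _ => mem_univ _) hf hφf

section SampleMean

variable {Ω α E : Type*} [MeasurableSpace Ω] [MeasurableSpace α] [NormedAddCommGroup E]
  [NormedSpace ℝ E] {μ : Measure Ω} {P : Measure α} {X : ℕ → Ω → α} {f : α → E}

theorem integrable_sampleMean (hX : ∀ i, AEMeasurable (X i) μ) (hXP : ∀ i, μ.map (X i) = P)
    (hf : Integrable f P) (N : ℕ) :
    Integrable (fun ω => (N : ℝ)⁻¹ • ∑ i ∈ Finset.range N, f (X i ω)) μ := by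
  refine (integrable_finsetSum _ fun i _ => ?_).smul _
  exact (hXP i ▸ hf).comp_aemeasurable (hX i)

theorem integral_sampleMean (hX : ∀ i, AEMeasurable (X i) μ) (hXP : ∀ i, μ.map (X i) = P)
    (hf : Integrable f P) {N : ℕ} (hN : N ≠ 0) :
    ∫ ω, (N : ℝ)⁻¹ • ∑ i ∈ Finset.range N, f (X i ω) ∂μ = ∫ x, f x ∂P := by
  have hterm : ∀ i, ∫ ω, f (X i ω) ∂μ = ∫ x, f x ∂P := fun i => by
    rw [← integral_map (hX i) (hXP i ▸ hf.aestronglyMeasurable), hXP i]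
  rw [integral_smul, integral_finsetSum _ fun i _ => (hXP i ▸ hf).comp_aemeasurable (hX i)]
  simp only [hterm, Finset.sum_const, Finset.card_range, ← Nat.cast_smul_eq_nsmul ℝ, smul_smul,
    inv_mul_cancel₀ (Nat.cast_ne_zero.mpr hN : (N : ℝ) ≠ 0), one_smul]

end SampleMean

theorem empirical_downward_bias_general
    (n m m1 : ℕ)
    (U : Set (Vec n)) (hUc : IsCompact U)
    (f1 : Vec n → Vec m1 → ℝ)
    (hf1cont : Continuous fun p : Vec n × Vec m1 => f1 p.1 p.2)
    (f2 : Vec n → Vec m → Vec m1)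
    (hf2cont : ∀ x, Continuous fun u => f2 u x)
    (P : Measure (Vec m))
    (hf2int : ∀ u, Integrable (fun x => f2 u x) P)
    -- f1(u,·) is concave for every u ∈ U
    (hconc : ∀ u ∈ U, ConcaveOn ℝ univ (f1 u))
    -- the i.i.d. sample X_1, …, X_N with distribution P
    (Ω : Type) [MeasurableSpace Ω] (μ : Measure Ω) [IsProbabilityMeasure μ]
    (X : ℕ → Ω → Vec m) (hXmeas : ∀ i, Measurable (X i))
    (hXdist : ∀ i, Measure.map (X i) μ = P)
    (N : ℕ) (hN : 0 < N)
    -- the empirical optimal value is integrable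
    (hintE : Integrable (fun ω => sInf ((fun u =>
      f1 u ((N : ℝ)⁻¹ • ∑ i ∈ Finset.range N, f2 u (X i ω))) '' U)) μ) :
    ∫ ω, sInf ((fun u =>
        f1 u ((N : ℝ)⁻¹ • ∑ i ∈ Finset.range N, f2 u (X i ω))) '' U) ∂μ
      ≤ sInf ((fun u => f1 u (∫ x, f2 u x ∂P)) '' U) := by
  rcases U.eq_empty_or_nonempty with rfl | hUne
  · simp -- both sides are the junk value `sInf ∅ = 0`
  refine le_csInf (hUne.image _) ?_
  rintro _ ⟨u, hu, rfl⟩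
  dsimp only
  have hXae : ∀ i, AEMeasurable (X i) μ := fun i => (hXmeas i).aemeasurable
  rw [← integral_sampleMean hXae hXdist (hf2int u) hN.ne']
  refine (hconc u hu).integral_le_map_integral_of_le_comp (by fun_prop)
    (integrable_sampleMean hXae hXdist (hf2int u) N) hintE (ae_of_all _ fun ω => ?_)
  have hcont : Continuous fun v => f1 v ((N : ℝ)⁻¹ • ∑ i ∈ Finset.range N, f2 v (X i ω)) := by
    fun_prop
  exact csInf_le (hUc.bddBelow_image hcont.continuousOn) (mem_image_of_mem _ hu)

/-- **Lemma 4.1 (downward bias of the empirical optimal value of a two-level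
composite problem).** -/
theorem empirical_downward_bias
    (n m m1 : ℕ)
    (U : Set (Vec n)) (hUne : U.Nonempty) (hUc : IsCompact U)
    (f1 : Vec n → Vec m1 → ℝ)
    (hf1cont : Continuous fun p : Vec n × Vec m1 => f1 p.1 p.2)
    (f2 : Vec n → Vec m → Vec m1)
    (hf2cont : ∀ x, Continuous fun u => f2 u x)
    (P : Measure (Vec m)) [IsProbabilityMeasure P]
    (hf2int : ∀ u, Integrable (fun x => f2 u x) P)
    -- f1(u,·) is concave for every u ∈ U
    (hconc : ∀ u ∈ U, ConcaveOn ℝ univ (f1 u))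
    -- the i.i.d. sample X_1, …, X_N with distribution P
    (Ω : Type) [MeasurableSpace Ω] (μ : Measure Ω) [IsProbabilityMeasure μ]
    (X : ℕ → Ω → Vec m) (hXmeas : ∀ i, Measurable (X i))
    (hiid : ProbabilityTheory.iIndepFun X μ)
    (hXdist : ∀ i, Measure.map (X i) μ = P)
    (N : ℕ) (hN : 0 < N)
    -- the empirical optimal value is integrable
    (hintE : Integrable (fun ω => sInf ((fun u =>
      f1 u ((N : ℝ)⁻¹ • ∑ i ∈ Finset.range N, f2 u (X i ω))) '' U)) μ) :
    ∫ ω, sInf ((fun u =>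
        f1 u ((N : ℝ)⁻¹ • ∑ i ∈ Finset.range N, f2 u (X i ω))) '' U) ∂μ
      ≤ sInf ((fun u => f1 u (∫ x, f2 u x ∂P)) '' U) :=
  empirical_downward_bias_general n m m1 U hUc f1 hf1cont f2 hf2cont P hf2int hconc Ω μ X hXmeas
    hXdist N hN hintE
end
end

section
/- Let φ : ℝ → [0,∞) be right-continuous, of finite variation, with compact support in [−a,a] (1/2 ≤ a < ∞), satisfying ∑_{ℓ∈ℤ} φ(x−ℓ) = 1 for all x ∈ ℝ (condition (w1)) and ∑_{ℓ∈ℤ} ℓ φ(x−ℓ) = x for all x ∈ ℝ (condition (w2)). Let g : ℝ → ℝ be convex and integrable against the measure with density x ↦ 2^j ∑_{ℓ∈ℤ} φ(2^j y − ℓ) φ(2^j x − ℓ). Then for every y ∈ ℝ and every integer j, 2^j ∫_ℝ g(x) ∑_{ℓ∈ℤ} φ(2^j y − ℓ) φ(2^j x − ℓ) dx ≥ g(y). In particular, for a sample X_1,…,X_N, the wavelet density estimator d̃_{N,j}(x) = ∑_{ℓ∈ℤ} 2^{−j/2} (1/N) ∑_{i=1}^N φ(2^j X_i − ℓ) φ_{jℓ}(x)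 satisfies ∫ g(x) d̃_{N,j}(x) dx ≥ (1/N) ∑_{i=1}^N g(X_i) for every convex integrable g. -/
/-!
For `c > 0` the kernel `x ↦ c ∑ φ(cy - ℓ) φ(cx - ℓ)` is a probability density with mean `y`.
Integrating (w1) and (w2) over one period gives `∫ φ = 1` and `∫ t φ(t) dt = 0`; the dilates
`x ↦ c φ(cx - ℓ)` are then densities with mean `ℓ / c`, and (w1), (w2) at the point `cy` say that
the weights `φ(cy - ℓ)` sum to `1` with barycentre `cy`. Jensen's inequality for this density,
obtained by integrating a supporting line of `g` at `y`, is the first claim; averaging it over the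
sample gives the second.
-/

open MeasureTheory Filter Set Function

lemma BoundedVariationOn.measurable {f : ℝ → ℝ} (hf : BoundedVariationOn f univ) :
    Measurable f := by
  obtain ⟨p, q, hp, hq, rfl⟩ := hf.locallyBoundedVariationOn.exists_monotoneOn_sub_monotoneOn
  exact (monotoneOn_univ.1 hp).measurable.sub (monotoneOn_univ.1 hq).measurable

section IntegerTranslates

variable {a : ℝ}

lemma comp_sub_intCast_eq_zero_of_notMem {M : Type*} [Zero M] {f : ℝ → M}
    (hf : support f ⊆ Icc (-a) a) {b c x : ℝ} (hx : x ∈ Icc b c) {ℓ : ℤ}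
    (hℓ : ℓ ∉ Finset.Icc ⌈b - a⌉ ⌊c + a⌋) : f (x - ℓ) = 0 := by
  by_contra h
  obtain ⟨hlo, hhi⟩ := hf h
  refine hℓ (Finset.mem_Icc.2 ⟨Int.ceil_le.2 ?_, Int.le_floor.2 ?_⟩) <;> linarith [hx.1, hx.2]

lemma summable_comp_sub_intCast {M : Type*} [AddCommMonoid M] [TopologicalSpace M] {f : ℝ → M}
    (hf : support f ⊆ Icc (-a) a) (x : ℝ) :
    Summable fun ℓ : ℤ => f (x - ℓ) :=
  summable_of_ne_finset_zero fun _ hℓ =>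
    comp_sub_intCast_eq_zero_of_notMem hf (left_mem_Icc.2 le_rfl) hℓ

variable {E : Type*} [NormedAddCommGroup E] [NormedSpace ℝ E]

lemma integral_eq_intervalIntegral_tsum_comp_sub_intCast {f : ℝ → E} (hfi : Integrable f)
    (hf : support f ⊆ Icc (-a) a) :
    ∫ x, f x = ∫ x in (0 : ℝ)..1, ∑' ℓ : ℤ, f (x - ℓ) := by
  set S := Finset.Icc ⌈0 - a⌉ ⌊1 + a⌋
  have hvanish : ∀ x ∈ uIcc (0 : ℝ) 1, ∀ ℓ ∉ S, f (x - ℓ) = 0 := fun x hx _ hℓ =>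
    comp_sub_intCast_eq_zero_of_notMem hf (by rwa [uIcc_of_le zero_le_one] at hx) hℓ
  have hsum : HasSum (fun ℓ : ℤ => ∫ x in (0 : ℝ)..1, f (x - ℓ)) (∫ x, f x) := by
    simpa [Function.comp_def, sub_eq_add_neg] using
      (Equiv.neg ℤ).hasSum_iff.2 hfi.hasSum_intervalIntegral_comp_add_int
  rw [← hsum.tsum_eq, tsum_eq_sum (s := S) fun ℓ hℓ => ?_,
    ← intervalIntegral.integral_finsetSum fun ℓ _ => (hfi.comp_sub_right _).intervalIntegrable]
  · exact intervalIntegral.integral_congr fun x hx => (tsum_eq_sum (hvanish x hx)).symm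
  · rw [intervalIntegral.integral_congr (g := 0) fun x hx => hvanish x hx ℓ hℓ]
    simp

end IntegerTranslates

section Moments

variable {φ : ℝ → ℝ} {a : ℝ}

lemma le_one_of_tsum_comp_sub_intCast_eq_one (hφ : ∀ x, 0 ≤ φ x)
    (hsupp : support φ ⊆ Icc (-a) a) (hw1 : ∀ x : ℝ, ∑' ℓ : ℤ, φ (x - ℓ) = 1) (x : ℝ) :
    φ x ≤ 1 := by
  simpa [hw1 x] using (summable_comp_sub_intCast hsupp x).le_tsum 0 fun _ _ => hφ _

lemma integrable_of_support_subset_Icc {f : ℝ → ℝ} (hmeas : Measurable f) {C : ℝ}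
    (hbdd : ∀ x, |f x| ≤ C) (hsupp : support f ⊆ Icc (-a) a) : Integrable f := by
  rw [← integrableOn_iff_integrable_of_support_subset hsupp]
  exact Measure.integrableOn_of_bounded (by simp) hmeas.aestronglyMeasurable
    (ae_of_all _ fun x => hbdd x)

lemma integrable_id_mul_of_support_subset_Icc {f : ℝ → ℝ} (hf : Integrable f)
    (hsupp : support f ⊆ Icc (-a) a) : Integrable fun x => x * f x := by
  rw [← integrableOn_iff_integrable_of_support_subset ((support_mul_subset_right _ _).trans hsupp)]
  exact hf.integrableOn.continuousOn_mul continuousOn_id isCompact_Icc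

lemma integral_eq_one_of_tsum_comp_sub_intCast_eq_one (hφ : Integrable φ)
    (hsupp : support φ ⊆ Icc (-a) a) (hw1 : ∀ x : ℝ, ∑' ℓ : ℤ, φ (x - ℓ) = 1) :
    ∫ x, φ x = 1 := by
  simp [integral_eq_intervalIntegral_tsum_comp_sub_intCast hφ hsupp, hw1]

lemma integral_id_mul_eq_zero (hφ : Integrable φ) (hsupp : support φ ⊆ Icc (-a) a)
    (hw1 : ∀ x : ℝ, ∑' ℓ : ℤ, φ (x - ℓ) = 1)
    (hw2 : ∀ x : ℝ, ∑' ℓ : ℤ, (ℓ : ℝ) * φ (x - ℓ) = x) :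
    ∫ x, x * φ x = 0 := by
  have hsupp' : support (fun x => x * φ x) ⊆ Icc (-a) a :=
    (support_mul_subset_right _ _).trans hsupp
  rw [integral_eq_intervalIntegral_tsum_comp_sub_intCast
    (integrable_id_mul_of_support_subset_Icc hφ hsupp) hsupp']
  have hzero : ∀ x : ℝ, ∑' ℓ : ℤ, (x - ℓ) * φ (x - ℓ) = 0 := by
    intro x
    have hs := summable_comp_sub_intCast hsupp x
    have hs' : Summable fun ℓ : ℤ => (ℓ : ℝ) * φ (x - ℓ) :=
      ((hs.mul_left x).sub (summable_comp_sub_intCast hsupp' x)).congr fun ℓ => by ring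
    simp_rw [sub_mul, (hs.mul_left x).tsum_sub hs', tsum_mul_left, hw1, hw2, mul_one, sub_self]
  simp [hzero]

end Moments

lemma ConvexOn.add_rightDeriv_mul_sub_le {S : Set ℝ} {f : ℝ → ℝ} (hf : ConvexOn ℝ S f)
    {x y : ℝ} (hx : x ∈ S) (hy : y ∈ interior S) :
    f y + derivWithin f (Ioi y) y * (x - y) ≤ f x := by
  rcases lt_trichotomy x y with hxy | rfl | hxy
  · have h := (hf.slope_le_leftDeriv_of_mem_interior hx hy hxy).trans
      (hf.leftDeriv_le_rightDeriv_of_mem_interior hy)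
    rw [slope_def_field, div_le_iff₀ (sub_pos.2 hxy)] at h
    linarith
  · simp
  · have h := hf.rightDeriv_le_slope_of_mem_interior hy hx hxy
    rw [slope_def_field, le_div_iff₀ (sub_pos.2 hxy)] at h
    linarith

lemma ConvexOn.le_integral_mul_of_integral_eq {g K : ℝ → ℝ} (hg : ConvexOn ℝ univ g)
    (hK : ∀ x, 0 ≤ K x) (hKi : Integrable K) (hxKi : Integrable fun x => x * K x)
    (hgK : Integrable fun x => g x * K x) {y : ℝ} (hK1 : ∫ x, K x = 1)
    (hKy : ∫ x, x * K x = y) :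
    g y ≤ ∫ x, g x * K x := by
  set s := derivWithin g (Ioi y) y
  have hsplit : (fun x => (g y + s * (x - y)) * K x) =
      fun x => (g y - s * y) * K x + s * (x * K x) := by
    ext x; ring
  have hKi' := hKi.const_mul (g y - s * y)
  have hxKi' := hxKi.const_mul s
  calc g y = ∫ x, (g y + s * (x - y)) * K x := by
        rw [hsplit, integral_add hKi' hxKi', integral_const_mul, integral_const_mul, hK1, hKy]
        ring
    _ ≤ ∫ x, g x * K x := integral_mono (hsplit ▸ hKi'.add hxKi') hgK fun x =>
        mul_le_mul_of_nonneg_right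
          (hg.add_rightDeriv_mul_sub_le (mem_univ x) (by simp)) (hK x)

section Dilation

variable {c : ℝ}

lemma integral_comp_mul_sub_of_pos {E : Type*} [NormedAddCommGroup E] [NormedSpace ℝ E]
    (f : ℝ → E) (hc : 0 < c) (d : ℝ) : ∫ x, f (c * x - d) = c⁻¹ • ∫ x, f x := by
  rw [Measure.integral_comp_mul_left (fun t => f (t - d)) c, integral_sub_right_eq_self,
    abs_of_pos (inv_pos.2 hc)]

variable {ψ : ℝ → ℝ}

lemma mul_comp_mul_sub_eq (hc : c ≠ 0) (d x : ℝ) :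
    x * ψ (c * x - d) = c⁻¹ * ((c * x - d) * ψ (c * x - d) + d * ψ (c * x - d)) := by
  field_simp
  ring

lemma integrable_mul_comp_mul_sub (hψ : Integrable ψ) (hψ' : Integrable fun t => t * ψ t)
    (hc : c ≠ 0) (d : ℝ) : Integrable fun x => x * ψ (c * x - d) := by
  simp_rw [mul_comp_mul_sub_eq hc d]
  exact (((hψ'.comp_sub_right d).comp_mul_left' hc).add
    (((hψ.comp_sub_right d).comp_mul_left' hc).const_mul d)).const_mul _

lemma integral_mul_comp_mul_sub (hψ : Integrable ψ) (hψ' : Integrable fun t => t * ψ t)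
    (hc : 0 < c) (d : ℝ) :
    ∫ x, x * ψ (c * x - d) = ((∫ t, t * ψ t) + d * ∫ t, ψ t) / c ^ 2 := by
  simp_rw [mul_comp_mul_sub_eq hc.ne' d]
  rw [integral_const_mul, integral_add ((hψ'.comp_sub_right d).comp_mul_left' hc.ne')
      (((hψ.comp_sub_right d).comp_mul_left' hc.ne').const_mul d), integral_const_mul,
    integral_comp_mul_sub_of_pos (fun t => t * ψ t) hc, integral_comp_mul_sub_of_pos ψ hc,
    smul_eq_mul, smul_eq_mul]
  field_simp

end Dilation

/-- The kernel `2^j K(2^j y, 2^j x)` of the paper, with a general scale `c` in place of `2^j`. -/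
noncomputable def dilatedKernel (φ : ℝ → ℝ) (c y x : ℝ) : ℝ :=
  c * ∑' ℓ : ℤ, φ (c * y - ℓ) * φ (c * x - ℓ)

section DilatedKernel

variable {φ : ℝ → ℝ} {a c : ℝ}

lemma dilatedKernel_nonneg (hφ : ∀ x, 0 ≤ φ x) (hc : 0 ≤ c) (y x : ℝ) :
    0 ≤ dilatedKernel φ c y x :=
  mul_nonneg hc (tsum_nonneg fun _ => mul_nonneg (hφ _) (hφ _))

lemma dilatedKernel_eq_sum (hsupp : support φ ⊆ Icc (-a) a) (c y x : ℝ) :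
    dilatedKernel φ c y x =
      c * ∑ ℓ ∈ Finset.Icc ⌈c * y - a⌉ ⌊c * y + a⌋, φ (c * y - ℓ) * φ (c * x - ℓ) := by
  rw [dilatedKernel, tsum_eq_sum fun ℓ hℓ => by
    rw [comp_sub_intCast_eq_zero_of_notMem hsupp (left_mem_Icc.2 le_rfl) hℓ, zero_mul]]

lemma mul_dilatedKernel_eq_sum (hsupp : support φ ⊆ Icc (-a) a) (c y x : ℝ) :
    x * dilatedKernel φ c y x =
      c * ∑ ℓ ∈ Finset.Icc ⌈c * y - a⌉ ⌊c * y + a⌋, φ (c * y - ℓ) * (x * φ (c * x - ℓ)) := by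
  rw [dilatedKernel_eq_sum hsupp, mul_left_comm, Finset.mul_sum]
  simp_rw [mul_left_comm x]

lemma integrable_dilatedKernel (hφi : Integrable φ) (hsupp : support φ ⊆ Icc (-a) a)
    (hc : c ≠ 0) (y : ℝ) : Integrable (dilatedKernel φ c y) := by
  simp_rw [funext (dilatedKernel_eq_sum hsupp c y)]
  exact (integrable_finsetSum _ fun ℓ _ =>
    ((hφi.comp_sub_right _).comp_mul_left' hc).const_mul _).const_mul c

lemma integrable_mul_dilatedKernel (hφi : Integrable φ) (hsupp : support φ ⊆ Icc (-a) a)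
    (hc : c ≠ 0) (y : ℝ) : Integrable fun x => x * dilatedKernel φ c y x := by
  simp_rw [mul_dilatedKernel_eq_sum hsupp c y]
  exact (integrable_finsetSum _ fun ℓ _ => (integrable_mul_comp_mul_sub hφi
    (integrable_id_mul_of_support_subset_Icc hφi hsupp) hc _).const_mul _).const_mul c

lemma integral_dilatedKernel (hφi : Integrable φ) (hsupp : support φ ⊆ Icc (-a) a)
    (hw1 : ∀ x : ℝ, ∑' ℓ : ℤ, φ (x - ℓ) = 1) (hc : 0 < c) (y : ℝ) :
    ∫ x, dilatedKernel φ c y x = 1 := by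
  have hφ1 := integral_eq_one_of_tsum_comp_sub_intCast_eq_one hφi hsupp hw1
  have hw1' : ∑ ℓ ∈ Finset.Icc ⌈c * y - a⌉ ⌊c * y + a⌋, φ (c * y - ℓ) = 1 := by
    rw [← hw1 (c * y), tsum_eq_sum fun ℓ hℓ =>
      comp_sub_intCast_eq_zero_of_notMem hsupp (left_mem_Icc.2 le_rfl) hℓ]
  simp_rw [dilatedKernel_eq_sum hsupp c y]
  rw [integral_const_mul, integral_finsetSum _ fun ℓ _ =>
    ((hφi.comp_sub_right _).comp_mul_left' hc.ne').const_mul _]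
  simp_rw [integral_const_mul, integral_comp_mul_sub_of_pos φ hc, hφ1, smul_eq_mul, mul_one,
    ← Finset.sum_mul, hw1']
  field_simp

lemma integral_mul_dilatedKernel (hφi : Integrable φ) (hsupp : support φ ⊆ Icc (-a) a)
    (hw1 : ∀ x : ℝ, ∑' ℓ : ℤ, φ (x - ℓ) = 1)
    (hw2 : ∀ x : ℝ, ∑' ℓ : ℤ, (ℓ : ℝ) * φ (x - ℓ) = x) (hc : 0 < c) (y : ℝ) :
    ∫ x, x * dilatedKernel φ c y x = y := by
  have hφi' := integrable_id_mul_of_support_subset_Icc hφi hsupp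
  have hφ1 := integral_eq_one_of_tsum_comp_sub_intCast_eq_one hφi hsupp hw1
  have hφ0 := integral_id_mul_eq_zero hφi hsupp hw1 hw2
  have hw2' : ∑ ℓ ∈ Finset.Icc ⌈c * y - a⌉ ⌊c * y + a⌋, (ℓ : ℝ) * φ (c * y - ℓ) = c * y :=
    (tsum_eq_sum fun ℓ hℓ => by
      rw [comp_sub_intCast_eq_zero_of_notMem hsupp (left_mem_Icc.2 le_rfl) hℓ, mul_zero]).symm.trans
      (hw2 _)
  simp_rw [mul_dilatedKernel_eq_sum hsupp c y]
  rw [integral_const_mul, integral_finsetSum _ fun ℓ _ =>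
    (integrable_mul_comp_mul_sub hφi hφi' hc.ne' _).const_mul _]
  simp_rw [integral_const_mul, integral_mul_comp_mul_sub hφi hφi' hc, hφ0, hφ1, zero_add,
    mul_one, ← mul_div_assoc, mul_comm (φ _), ← Finset.sum_div, hw2']
  field_simp

end DilatedKernel

lemma ConvexOn.le_integral_mul_dilatedKernel {φ g : ℝ → ℝ} {a c : ℝ} (hg : ConvexOn ℝ univ g)
    (hφ : ∀ x, 0 ≤ φ x) (hφi : Integrable φ) (hsupp : support φ ⊆ Icc (-a) a)
    (hw1 : ∀ x : ℝ, ∑' ℓ : ℤ, φ (x - ℓ) = 1)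
    (hw2 : ∀ x : ℝ, ∑' ℓ : ℤ, (ℓ : ℝ) * φ (x - ℓ) = x) (hc : 0 < c) (y : ℝ)
    (hgK : Integrable fun x => g x * dilatedKernel φ c y x) :
    g y ≤ ∫ x, g x * dilatedKernel φ c y x :=
  hg.le_integral_mul_of_integral_eq (dilatedKernel_nonneg hφ hc.le y)
    (integrable_dilatedKernel hφi hsupp hc.ne' y) (integrable_mul_dilatedKernel hφi hsupp hc.ne' y)
    hgK (integral_dilatedKernel hφi hsupp hw1 hc y)
    (integral_mul_dilatedKernel hφi hsupp hw1 hw2 hc y)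

theorem wavelet_jensen_general
    (φ : ℝ → ℝ) (hφnn : ∀ x, 0 ≤ φ x)
    (hφbv : BoundedVariationOn φ univ)
    (a : ℝ) (hφsupp : Function.support φ ⊆ Icc (-a) a)
    (hw1 : ∀ x : ℝ, ∑' ℓ : ℤ, φ (x - ℓ) = 1)
    (hw2 : ∀ x : ℝ, ∑' ℓ : ℤ, (ℓ : ℝ) * φ (x - ℓ) = x)
    (g : ℝ → ℝ) (hgconv : ConvexOn ℝ univ g)
    (hgint : ∀ (j : ℤ) (y : ℝ), Integrable fun x : ℝ =>
      g x * ((2 : ℝ) ^ j * ∑' ℓ : ℤ, φ ((2 : ℝ) ^ j * y - ℓ) * φ ((2 : ℝ) ^ j * x - ℓ))) :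
    (∀ (j : ℤ) (y : ℝ),
      g y ≤ (2 : ℝ) ^ j *
        ∫ x : ℝ, g x * ∑' ℓ : ℤ, φ ((2 : ℝ) ^ j * y - ℓ) * φ ((2 : ℝ) ^ j * x - ℓ)) ∧
    (∀ (N : ℕ), 0 < N → ∀ (X : Fin N → ℝ) (j : ℤ),
      (N : ℝ)⁻¹ * ∑ i, g (X i) ≤
        ∫ x : ℝ, g x * (((2 : ℝ) ^ j / N) *
          ∑ i, ∑' ℓ : ℤ, φ ((2 : ℝ) ^ j * X i - ℓ) * φ ((2 : ℝ) ^ j * x - ℓ))) := by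
  have hφi : Integrable φ := integrable_of_support_subset_Icc hφbv.measurable (fun x => by
    rw [abs_of_nonneg (hφnn x)]
    exact le_one_of_tsum_comp_sub_intCast_eq_one hφnn hφsupp hw1 x) hφsupp
  have jensen (j : ℤ) (y : ℝ) : g y ≤ ∫ x, g x * dilatedKernel φ (2 ^ j) y x :=
    hgconv.le_integral_mul_dilatedKernel hφnn hφi hφsupp hw1 hw2 (zpow_pos two_pos j) y
      (hgint j y)
  refine ⟨fun j y => ?_, fun N _ X j => ?_⟩
  · simpa only [dilatedKernel, mul_left_comm (g _), integral_const_mul] using jensen j y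
  · have hmean : (fun x => g x * (((2 : ℝ) ^ j / N) *
        ∑ i, ∑' ℓ : ℤ, φ ((2 : ℝ) ^ j * X i - ℓ) * φ ((2 : ℝ) ^ j * x - ℓ))) =
        fun x => (N : ℝ)⁻¹ * ∑ i, g x * dilatedKernel φ (2 ^ j) (X i) x := by
      ext x
      simp only [dilatedKernel, Finset.mul_sum]
      exact Finset.sum_congr rfl fun i _ => by ring
    have hgK (i : Fin N) : Integrable fun x => g x * dilatedKernel φ (2 ^ j) (X i) x :=
      hgint j (X i)
    rw [hmean, integral_const_mul, integral_finsetSum _ fun i _ => hgK i]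
    exact mul_le_mul_of_nonneg_left (Finset.sum_le_sum fun i _ => jensen j (X i)) (by positivity)

/-- **Wavelet Jensen inequality** (key step in the proof of Theorem 4.3): under
the partition-of-unity condition (w1) and the linear-reproduction condition
(w2), the wavelet kernel `2^j ∑_ℓ φ(2^j y - ℓ) φ(2^j x - ℓ)` averages any convex
integrable `g` to a value ≥ `g(y)`; consequently the wavelet density estimator
`d̃_{N,j}` satisfies `∫ g d̃_{N,j} ≥ (1/N) ∑ᵢ g(Xᵢ)`. -/
theorem wavelet_jensen
    (φ : ℝ → ℝ) (hφnn : ∀ x, 0 ≤ φ x)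
    (hφrc : ∀ x, ContinuousWithinAt φ (Ici x) x)
    (hφbv : BoundedVariationOn φ univ)
    (a : ℝ) (ha : 1 / 2 ≤ a) (hφsupp : Function.support φ ⊆ Icc (-a) a)
    (hw1 : ∀ x : ℝ, ∑' ℓ : ℤ, φ (x - ℓ) = 1)
    (hw2 : ∀ x : ℝ, ∑' ℓ : ℤ, (ℓ : ℝ) * φ (x - ℓ) = x)
    (g : ℝ → ℝ) (hgconv : ConvexOn ℝ univ g)
    (hgint : ∀ (j : ℤ) (y : ℝ), Integrable fun x : ℝ =>
      g x * ((2 : ℝ) ^ j * ∑' ℓ : ℤ, φ ((2 : ℝ) ^ j * y - ℓ) * φ ((2 : ℝ) ^ j * x - ℓ))) :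
    (∀ (j : ℤ) (y : ℝ),
      g y ≤ (2 : ℝ) ^ j *
        ∫ x : ℝ, g x * ∑' ℓ : ℤ, φ ((2 : ℝ) ^ j * y - ℓ) * φ ((2 : ℝ) ^ j * x - ℓ)) ∧
    (∀ (N : ℕ), 0 < N → ∀ (X : Fin N → ℝ) (j : ℤ),
      (N : ℝ)⁻¹ * ∑ i, g (X i) ≤
        ∫ x : ℝ, g x * (((2 : ℝ) ^ j / N) *
          ∑ i, ∑' ℓ : ℤ, φ ((2 : ℝ) ^ j * X i - ℓ) * φ ((2 : ℝ) ^ j * x - ℓ))) :=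
  wavelet_jensen_general φ hφnn hφbv a hφsupp hw1 hw2 g hgconv hgint
end
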